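/- arXiv:1111.2462 — 5 statements merged into one kernel-verified Lean document; each statement's English description precedes it below -/
import Mathlib

section
/- Let T > 0 and let Φ : [0,T] → Matrix (Fin d) (Fin d) ℝ be continuous with Φ(t) invertible for every t ∈ [0,T], and let v₁, …, v_m : [0,T] → ℝ^d be continuous. Suppose there exists t* ∈ [0,T] such that span{v₁(t*), …, v_m(t*)} = ℝ^d. Then for every nonzero p ∈ ℝ^d one has ∫₀ᵀ Σ_{j=1}^{m} ⟨p, Φ(t)·v_j(t)⟩² dt > 0; in other words, the symmetric bilinear form C on ℝ^d defined by ⟨C p, p⟩ = ∫₀ᵀ Σ_{j=1}^{m} ⟨p, Φ(t)·v_j(t)⟩² dt is positive definite (hence invertible). -/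
open MeasureTheory

/-- Invertibility (positive definiteness) of the deterministic Malliavin covariance
matrix under a pointwise ellipticity (spanning) condition at some time `tstar`. -/
theorem stmt_0 {d m : ℕ} (T : ℝ) (hT : 0 < T)
    (Φ : ℝ → Matrix (Fin d) (Fin d) ℝ)
    (hΦc : ContinuousOn Φ (Set.Icc 0 T))
    (hΦinv : ∀ t ∈ Set.Icc (0:ℝ) T, IsUnit (Φ t))
    (v : Fin m → ℝ → (Fin d → ℝ))
    (hv : ∀ j, ContinuousOn (v j) (Set.Icc 0 T))
    (tstar : ℝ) (htstar : tstar ∈ Set.Icc (0:ℝ) T)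
    (hspan : Submodule.span ℝ (Set.range fun j => v j tstar) = ⊤)
    (p : Fin d → ℝ) (hp : p ≠ 0) :
    0 < ∫ t in (0:ℝ)..T, ∑ j, (∑ i, p i * ((Φ t).mulVec (v j t)) i) ^ 2 := by
  classical
  set f : ℝ → ℝ := fun t => ∑ j, (∑ i, p i * ((Φ t).mulVec (v j t)) i) ^ 2 with hf
  -- continuity of f on [0,T]
  have hfc : ContinuousOn f (Set.Icc 0 T) := by
    apply continuousOn_finset_sum
    intro j _
    apply ContinuousOn.pow
    apply continuousOn_finset_sum
    intro i _
    apply ContinuousOn.mul continuousOn_const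
    have : ∀ t, ((Φ t).mulVec (v j t)) i = ∑ k, Φ t i k * v j t k := by
      intro t; rfl
    simp only [this]
    apply continuousOn_finset_sum
    intro k _
    exact (((continuous_apply k).comp (continuous_apply i)).comp_continuousOn hΦc).mul
      ((continuous_apply k).comp_continuousOn (hv j))
  -- nonnegativity
  have hfnn : ∀ t, 0 ≤ f t := fun t => Finset.sum_nonneg fun j _ => sq_nonneg _
  -- positivity at tstar
  have hftstar : 0 < f tstar := by
    rcases (hfnn tstar).lt_or_eq with h | h
    · exact h
    exfalso
    have hzero : ∀ j, (∑ i, p i * ((Φ tstar).mulVec (v j tstar)) i) = 0 := by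
      intro j
      have := (Finset.sum_eq_zero_iff_of_nonneg
        (fun j _ => sq_nonneg ((∑ i, p i * ((Φ tstar).mulVec (v j tstar)) i)))).mp h.symm
      exact pow_eq_zero_iff (n := 2) (by norm_num) |>.mp (this j (Finset.mem_univ j))
    set q : Fin d → ℝ := Matrix.vecMul p (Φ tstar) with hq
    have hqv : ∀ j, dotProduct q (v j tstar) = 0 := by
      intro j
      have := hzero j
      rw [show (∑ i, p i * ((Φ tstar).mulVec (v j tstar)) i)
          = dotProduct p ((Φ tstar).mulVec (v j tstar)) from rfl,
        Matrix.dotProduct_mulVec] at this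
      exact this
    have hqw : ∀ w ∈ Submodule.span ℝ (Set.range fun j => v j tstar),
        dotProduct q w = 0 := by
      intro w hw
      induction hw using Submodule.span_induction with
      | mem x hx => obtain ⟨j, rfl⟩ := hx; exact hqv j
      | zero => simp
      | add x y _ _ hx hy => rw [dotProduct_add, hx, hy, add_zero]
      | smul c x _ hx => rw [dotProduct_smul, hx, smul_zero]
    have hq0 : q = 0 := by
      have := hqw q (by rw [hspan]; trivial)
      exact dotProduct_self_eq_zero.mp this
    have hdet : IsUnit (Φ tstar).det := (Matrix.isUnit_iff_isUnit_det _).mp (hΦinv tstar htstar)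
    apply hp
    calc p = Matrix.vecMul p ((Φ tstar) * (Φ tstar)⁻¹) := by
              rw [Matrix.mul_nonsing_inv _ hdet, Matrix.vecMul_one]
      _ = Matrix.vecMul q (Φ tstar)⁻¹ := by rw [← Matrix.vecMul_vecMul]
      _ = 0 := by rw [hq0, Matrix.zero_vecMul]
  -- find a small interval around tstar where f > f tstar / 2
  have hev : {t | f tstar / 2 < f t} ∈ nhdsWithin tstar (Set.Icc 0 T) :=
    (hfc tstar htstar) (Ioi_mem_nhds (half_lt_self hftstar))
  rw [Metric.mem_nhdsWithin_iff] at hev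
  obtain ⟨δ, hδ, hball⟩ := hev
  obtain ⟨ht0, htT⟩ := htstar
  set a := max 0 (tstar - δ/2) with ha
  set b := min T (tstar + δ/2) with hb
  have hab : a < b := by
    rw [ha, hb]
    apply max_lt <;> apply lt_min <;> linarith
  have ha0 : 0 ≤ a := le_max_left _ _
  have hbT : b ≤ T := min_le_left _ _
  have hsub : ∀ t ∈ Set.Icc a b, f tstar / 2 < f t := by
    intro t ⟨hta, htb⟩
    apply hball
    constructor
    · rw [Metric.mem_ball, Real.dist_eq, abs_lt]
      have h1 : tstar - δ/2 ≤ t := le_trans (le_max_right _ _) hta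
      have h2 : t ≤ tstar + δ/2 := le_trans htb (min_le_right _ _)
      constructor <;> linarith
    · exact ⟨le_trans ha0 hta, le_trans htb hbT⟩
  have hInt : IntervalIntegrable f volume 0 T := by
    apply ContinuousOn.intervalIntegrable
    rwa [Set.uIcc_of_le hT.le]
  have hIntab : IntervalIntegrable f volume a b := by
    apply ContinuousOn.intervalIntegrable
    rw [Set.uIcc_of_le hab.le]
    exact hfc.mono (Set.Icc_subset_Icc ha0 hbT)
  have step1 : 0 < ∫ t in a..b, f t := by
    have hconst : ∫ _ in a..b, (f tstar / 2) = (b - a) * (f tstar / 2) := by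
      simp [smul_eq_mul]; ring
    have hle : ∫ _ in a..b, (f tstar / 2) ≤ ∫ t in a..b, f t :=
      intervalIntegral.integral_mono_on hab.le intervalIntegrable_const hIntab
        (fun t ht => (hsub t ht).le)
    have : 0 < (b - a) * (f tstar / 2) := by
      apply mul_pos (by linarith) (by linarith)
    linarith [hconst ▸ hle]
  have step2 : (∫ t in a..b, f t) ≤ ∫ t in (0:ℝ)..T, f t := by
    apply intervalIntegral.integral_mono_interval ha0 hab.le hbT _ hInt
    filter_upwards with t using hfnn t
  linarith
end

section
/- Let H be a real Hilbert space, l ≥ 1, and let ψ : H → ℝ^l be Fréchet differentiable. Let a ∈ ℝ^l and let h₀ : ℝ^l → H be Fréchet differentiable at a with ψ(h₀(y)) = y for all y in a neighbourhood of a. Suppose q ∈ ℝ^l satisfies h₀(a) = (Dψ(h₀(a)))*(q), where (Dψ(h₀(a)))* : ℝ^l → H is the adjoint of the Fréchet derivative Dψ(h₀(a)) : H → ℝ^l. Then the function Λ(y) := (1/2)‖h₀(y)‖²_H is differentiable at a and its derivative is the linear functional v ↦ ⟨q, v⟩, i.e. Λ′(a) = q. -/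
open RealInnerProductSpace

/-! Differentiating `ψ (h₀ y) = y` at `a` shows that `Dh₀(a)` is a right inverse of
`T = Dψ(h₀ a)`. The derivative of `½‖h₀‖²` at `a` is `v ↦ ⟪h₀ a, Dh₀(a) v⟫`, and since
`h₀ a = T† q` this equals `⟪q, T (Dh₀(a) v)⟫ = ⟪q, v⟫`. -/

theorem HasFDerivAt.fderiv_comp_eq_id_of_eventually_leftInverse
    {𝕜 E F : Type*} [NontriviallyNormedField 𝕜]
    [NormedAddCommGroup E] [NormedSpace 𝕜 E] [NormedAddCommGroup F] [NormedSpace 𝕜 F]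
    {ψ : F → E} {h : E → F} {D : E →L[𝕜] F} {a : E}
    (hh : HasFDerivAt h D a) (hψ : DifferentiableAt 𝕜 ψ (h a))
    (hsec : ∀ᶠ y in nhds a, ψ (h y) = y) :
    (fderiv 𝕜 ψ (h a)).comp D = ContinuousLinearMap.id 𝕜 E :=
  (hψ.hasFDerivAt.comp a hh).unique ((hasFDerivAt_id a).congr_of_eventuallyEq hsec)

theorem HasFDerivAt.half_norm_sq {G F : Type*} [NormedAddCommGroup G] [NormedSpace ℝ G]
    [NormedAddCommGroup F] [InnerProductSpace ℝ F] {f : G → F} {f' : G →L[ℝ] F} {x : G}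
    (hf : HasFDerivAt f f' x) :
    HasFDerivAt (fun y => (1/2 : ℝ) * ‖f y‖ ^ 2) ((innerSL ℝ (f x)).comp f') x := by
  refine (hf.norm_sq.const_mul (1/2 : ℝ)).congr_fderiv ?_
  ext v
  simp

theorem hasFDerivAt_half_norm_sq_of_eq_adjoint {E F : Type*}
    [NormedAddCommGroup E] [InnerProductSpace ℝ E] [CompleteSpace E]
    [NormedAddCommGroup F] [InnerProductSpace ℝ F] [CompleteSpace F]
    {h : E → F} {D : E →L[ℝ] F} {T : F →L[ℝ] E} {a q : E}
    (hh : HasFDerivAt h D a) (hTD : T.comp D = ContinuousLinearMap.id ℝ E)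
    (hq : h a = ContinuousLinearMap.adjoint T q) :
    HasFDerivAt (fun y => (1/2 : ℝ) * ‖h y‖ ^ 2) (innerSL ℝ q) a := by
  have hderiv : (innerSL ℝ (h a)).comp D = innerSL ℝ q := by
    rw [hq, ← ContinuousLinearMap.innerSL_apply_comp, ContinuousLinearMap.comp_assoc, hTD,
      ContinuousLinearMap.comp_id]
  exact hderiv ▸ hh.half_norm_sq

theorem stmt_2_general {H : Type*} [NormedAddCommGroup H] [InnerProductSpace ℝ H] [CompleteSpace H]
    {l : ℕ}
    (ψ : H → EuclideanSpace ℝ (Fin l)) (hψ : Differentiable ℝ ψ)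
    (a : EuclideanSpace ℝ (Fin l)) (h₀ : EuclideanSpace ℝ (Fin l) → H)
    (hdiff : DifferentiableAt ℝ h₀ a)
    (hsec : ∀ᶠ y in nhds a, ψ (h₀ y) = y)
    (q : EuclideanSpace ℝ (Fin l))
    (hq : h₀ a = ContinuousLinearMap.adjoint (fderiv ℝ ψ (h₀ a)) q) :
    HasFDerivAt (fun y => (1/2 : ℝ) * ‖h₀ y‖ ^ 2) (innerSL ℝ q) a :=
  hasFDerivAt_half_norm_sq_of_eq_adjoint hdiff.hasFDerivAt
    (hdiff.hasFDerivAt.fderiv_comp_eq_id_of_eventually_leftInverse (hψ _) hsec) hq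

/-- Derivative of the energy `Λ(y) = (1/2)‖h₀(y)‖²` along a family of controls with
`ψ(h₀(y)) = y`, when `h₀(a) = (Dψ(h₀(a)))* q`: one has `Λ′(a) = q` (i.e. the derivative
is the linear functional `v ↦ ⟨q, v⟩`). -/
theorem stmt_2 {H : Type*} [NormedAddCommGroup H] [InnerProductSpace ℝ H] [CompleteSpace H]
    {l : ℕ} (hl : 1 ≤ l)
    (ψ : H → EuclideanSpace ℝ (Fin l)) (hψ : Differentiable ℝ ψ)
    (a : EuclideanSpace ℝ (Fin l)) (h₀ : EuclideanSpace ℝ (Fin l) → H)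
    (hdiff : DifferentiableAt ℝ h₀ a)
    (hsec : ∀ᶠ y in nhds a, ψ (h₀ y) = y)
    (q : EuclideanSpace ℝ (Fin l))
    (hq : h₀ a = ContinuousLinearMap.adjoint (fderiv ℝ ψ (h₀ a)) q) :
    HasFDerivAt (fun y => (1/2 : ℝ) * ‖h₀ y‖ ^ 2) (innerSL ℝ q) a :=
  stmt_2_general ψ hψ a h₀ hdiff hsec q hq
end

section
/- Fix θ ∈ [0,1]. For every continuously differentiable h = (h¹, h²) : [0,1] → ℝ² with h(0) = (0,0) and h¹(1) + θ ∫₀¹ h²(t) (h²)′(t) dt = 1, one has (1/2)∫₀¹ ((h¹)′(t)² + (h²)′(t)²) dt ≥ 1/2, with equality for h₀(t) = (t, 0). Moreover, if θ ∈ [0,1), then h₀ is the unique such path achieving equality. -/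
/-!
Write `a = h¹(1)`, `b = h²(1)`. Since `∫₀¹ h² dh² = b²/2`, the constraint reads
`a + θb²/2 = 1`, and then `a² + b² = 1 + (1 - θ)b² + (θb²/2)²`. On the other hand
`∫₀¹ (h')² = h(1)² + ∫₀¹ (h' - h(1))²` for a C¹ path with `h(0) = 0`, so twice the energy
is `1` plus four nonnegative terms.
Equality forces all of them to vanish: for `θ < 1` this gives `b = 0`, hence `a = 1`, and the
velocities are constant, `(h¹)' ≡ 1` and `(h²)' ≡ 0`.
-/

open MeasureTheory Set intervalIntegral

section Calculus

variable {h f : ℝ → ℝ} {a b : ℝ}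

theorem integral_derivWithin_Icc (hab : a < b) (hh : ContDiffOn ℝ 1 h (Icc a b)) {t : ℝ}
    (ht : t ∈ Icc a b) : ∫ x in a..t, derivWithin h (Icc a b) x = h t - h a := by
  apply integral_eq_sub_of_hasDeriv_right_of_le ht.1
    (hh.continuousOn.mono (Icc_subset_Icc_right ht.2))
  · intro x hx
    exact (hh.differentiableOn one_ne_zero x ⟨hx.1.le, hx.2.le.trans ht.2⟩).hasDerivWithinAt
      |>.mono_of_mem_nhdsWithin (Icc_mem_nhdsGT_of_mem ⟨hx.1.le, hx.2.trans_le ht.2⟩)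
  · exact ((hh.continuousOn_derivWithin (uniqueDiffOn_Icc hab) le_rfl).mono
      (Icc_subset_Icc_right ht.2)).intervalIntegrable_of_Icc ht.1

theorem integral_mul_derivWithin_self_Icc (hab : a < b) (hh : ContDiffOn ℝ 1 h (Icc a b)) :
    ∫ x in a..b, h x * derivWithin h (Icc a b) x = (h b ^ 2 - h a ^ 2) / 2 := by
  have hsq : ContDiffOn ℝ 1 (fun x => h x ^ 2 / 2) (Icc a b) := (hh.pow 2).div_const 2
  calc ∫ x in a..b, h x * derivWithin h (Icc a b) x
      = ∫ x in a..b, derivWithin (fun x => h x ^ 2 / 2) (Icc a b) x := by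
        refine integral_congr fun x hx => ?_
        rw [uIcc_of_le hab.le] at hx
        have hderiv :=
          ((hh.differentiableOn one_ne_zero x hx).hasDerivWithinAt.fun_pow 2).div_const 2
        rw [hderiv.derivWithin (uniqueDiffOn_Icc hab x hx)]
        ring
    _ = (h b ^ 2 - h a ^ 2) / 2 := by
        rw [integral_derivWithin_Icc hab hsq (right_mem_Icc.2 hab.le)]
        ring

theorem eqOn_of_integral_sub_sq_eq_zero (hab : a < b) (hf : ContinuousOn f (Icc a b)) {c : ℝ}
    (hzero : ∫ x in a..b, (f x - c) ^ 2 = 0) : EqOn f (fun _ => c) (Icc a b) := by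
  intro x hx
  by_contra hne
  refine (integral_pos hab ((hf.sub continuousOn_const).pow 2) (fun _ _ => sq_nonneg _)
    ⟨x, hx, ?_⟩).ne' hzero
  exact sq_pos_of_ne_zero (sub_ne_zero.2 hne)

theorem eq_add_mul_of_integral_derivWithin_sub_sq_eq_zero (hab : a < b)
    (hh : ContDiffOn ℝ 1 h (Icc a b)) {c : ℝ}
    (hzero : ∫ x in a..b, (derivWithin h (Icc a b) x - c) ^ 2 = 0) {t : ℝ} (ht : t ∈ Icc a b) :
    h t = h a + c * (t - a) := by
  have hconst := eqOn_of_integral_sub_sq_eq_zero hab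
    (hh.continuousOn_derivWithin (uniqueDiffOn_Icc hab) le_rfl) hzero
  have hint : ∫ x in a..t, derivWithin h (Icc a b) x = ∫ _ in a..t, c :=
    integral_congr fun x hx => hconst <| Icc_subset_Icc_right ht.2 <| uIcc_of_le ht.1 ▸ hx
  rw [integral_derivWithin_Icc hab hh ht, intervalIntegral.integral_const, smul_eq_mul] at hint
  linarith

theorem integral_sub_integral_sq_unitInterval (hf : IntervalIntegrable f volume 0 1)
    (hf2 : IntervalIntegrable (fun x => f x ^ 2) volume 0 1) :
    ∫ x in (0:ℝ)..1, (f x - ∫ y in (0:ℝ)..1, f y) ^ 2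
      = (∫ x in (0:ℝ)..1, f x ^ 2) - (∫ x in (0:ℝ)..1, f x) ^ 2 := by
  set m := ∫ y in (0:ℝ)..1, f y
  have hexpand : ∀ x, (f x - m) ^ 2 = f x ^ 2 - 2 * m * f x + m ^ 2 := fun x => by ring
  simp_rw [hexpand]
  rw [integral_add (hf2.sub (hf.const_mul _)) intervalIntegrable_const,
    integral_sub hf2 (hf.const_mul _), intervalIntegral.integral_const_mul,
    intervalIntegral.integral_const]
  simp only [sub_zero, one_smul]
  ring

theorem integral_derivWithin_sq_unitInterval (hh : ContDiffOn ℝ 1 h (Icc 0 1))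
    (h0 : h 0 = 0) :
    ∫ x in (0:ℝ)..1, derivWithin h (Icc 0 1) x ^ 2
      = h 1 ^ 2 + ∫ x in (0:ℝ)..1, (derivWithin h (Icc 0 1) x - h 1) ^ 2 := by
  have hcont := hh.continuousOn_derivWithin (uniqueDiffOn_Icc zero_lt_one) le_rfl
  have hint : ∫ x in (0:ℝ)..1, derivWithin h (Icc 0 1) x = h 1 := by
    rw [integral_derivWithin_Icc zero_lt_one hh (right_mem_Icc.2 zero_le_one), h0, sub_zero]
  have := integral_sub_integral_sq_unitInterval (hcont.intervalIntegrable_of_Icc zero_le_one)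
    ((hcont.pow 2).intervalIntegrable_of_Icc zero_le_one)
  rw [hint] at this
  linarith

end Calculus

theorem integral_energy_eq_of_constraint (θ : ℝ) {h1 h2 : ℝ → ℝ}
    (hc1 : ContDiffOn ℝ 1 h1 (Icc 0 1)) (hc2 : ContDiffOn ℝ 1 h2 (Icc 0 1))
    (h10 : h1 0 = 0) (h20 : h2 0 = 0)
    (hcon : h1 1 + θ * (∫ t in (0:ℝ)..1, h2 t * derivWithin h2 (Icc 0 1) t) = 1) :
    ∫ t in (0:ℝ)..1, (derivWithin h1 (Icc 0 1) t ^ 2 + derivWithin h2 (Icc 0 1) t ^ 2)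
      = 1 + (1 - θ) * h2 1 ^ 2 + (θ * h2 1 ^ 2 / 2) ^ 2
        + (∫ t in (0:ℝ)..1, (derivWithin h1 (Icc 0 1) t - h1 1) ^ 2)
        + ∫ t in (0:ℝ)..1, (derivWithin h2 (Icc 0 1) t - h2 1) ^ 2 := by
  have hsq_int : ∀ {g : ℝ → ℝ}, ContDiffOn ℝ 1 g (Icc 0 1) →
      IntervalIntegrable (fun t => derivWithin g (Icc 0 1) t ^ 2) volume 0 1 := fun hg =>
    ((hg.continuousOn_derivWithin (uniqueDiffOn_Icc zero_lt_one) le_rfl).pow 2)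
      |>.intervalIntegrable_of_Icc zero_le_one
  rw [integral_mul_derivWithin_self_Icc zero_lt_one hc2, h20] at hcon
  rw [integral_add (hsq_int hc1) (hsq_int hc2), integral_derivWithin_sq_unitInterval hc1 h10,
    integral_derivWithin_sq_unitInterval hc2 h20]
  linear_combination (h1 1 + θ * h2 1 ^ 2 / 2 + 1 - θ * h2 1 ^ 2) * hcon

theorem integral_energy_straight_line :
    ∫ t in (0:ℝ)..1, (derivWithin (fun t : ℝ => t) (Icc 0 1) t ^ 2
      + derivWithin (fun _ : ℝ => (0:ℝ)) (Icc 0 1) t ^ 2) = 1 := by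
  have hvel : EqOn (fun t => derivWithin (fun t : ℝ => t) (Icc 0 1) t ^ 2
      + derivWithin (fun _ : ℝ => (0:ℝ)) (Icc 0 1) t ^ 2) (fun _ => 1) (uIcc 0 1) := by
    intro x hx
    rw [uIcc_of_le zero_le_one] at hx
    simp [derivWithin_id' _ _ (uniqueDiffOn_Icc zero_lt_one x hx)]
  rw [integral_congr hvel]
  simp

theorem eq_straight_line_of_integral_energy_eq_one {θ : ℝ} (hθ : θ < 1) {h1 h2 : ℝ → ℝ}
    (hc1 : ContDiffOn ℝ 1 h1 (Icc 0 1)) (hc2 : ContDiffOn ℝ 1 h2 (Icc 0 1))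
    (h10 : h1 0 = 0) (h20 : h2 0 = 0)
    (hcon : h1 1 + θ * (∫ t in (0:ℝ)..1, h2 t * derivWithin h2 (Icc 0 1) t) = 1)
    (hE : ∫ t in (0:ℝ)..1, (derivWithin h1 (Icc 0 1) t ^ 2 + derivWithin h2 (Icc 0 1) t ^ 2) = 1)
    {t : ℝ} (ht : t ∈ Icc 0 1) : h1 t = t ∧ h2 t = 0 := by
  rw [integral_energy_eq_of_constraint θ hc1 hc2 h10 h20 hcon] at hE
  have hdef1 : 0 ≤ ∫ t in (0:ℝ)..1, (derivWithin h1 (Icc 0 1) t - h1 1) ^ 2 :=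
    integral_nonneg zero_le_one fun _ _ => sq_nonneg _
  have hdef2 : 0 ≤ ∫ t in (0:ℝ)..1, (derivWithin h2 (Icc 0 1) t - h2 1) ^ 2 :=
    integral_nonneg zero_le_one fun _ _ => sq_nonneg _
  have hb := mul_nonneg (sub_nonneg.2 hθ.le) (sq_nonneg (h2 1))
  have hb' := sq_nonneg (θ * h2 1 ^ 2 / 2)
  have hend2 : h2 1 = 0 := by
    have : (1 - θ) * h2 1 ^ 2 = 0 := by linarith
    simpa [(sub_pos.2 hθ).ne'] using this
  rw [integral_mul_derivWithin_self_Icc zero_lt_one hc2, h20, hend2] at hcon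
  have hend1 : h1 1 = 1 := by linarith
  have hzero1 : ∫ t in (0:ℝ)..1, (derivWithin h1 (Icc 0 1) t - h1 1) ^ 2 = 0 := by linarith
  have hzero2 : ∫ t in (0:ℝ)..1, (derivWithin h2 (Icc 0 1) t - h2 1) ^ 2 = 0 := by linarith
  constructor
  · simpa [h10, hend1] using
      eq_add_mul_of_integral_derivWithin_sub_sq_eq_zero zero_lt_one hc1 hzero1 ht
  · simpa [h20, hend2] using
      eq_add_mul_of_integral_derivWithin_sub_sq_eq_zero zero_lt_one hc2 hzero2 ht

/-- Minimizer in the flat elliptic example: for `θ ∈ [0,1]`, among C¹ paths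
`h = (h¹,h²)` on `[0,1]` starting at the origin with `h¹(1) + θ∫₀¹ h² dh² = 1`, the
energy is at least `1/2`, with equality for `h₀(t) = (t,0)`; for `θ < 1` the
minimizer is unique. -/
theorem stmt_9 (θ : ℝ) (hθ : θ ∈ Set.Icc (0:ℝ) 1) :
    (∀ h1 h2 : ℝ → ℝ,
      ContDiffOn ℝ 1 h1 (Set.Icc 0 1) → ContDiffOn ℝ 1 h2 (Set.Icc 0 1) →
      h1 0 = 0 → h2 0 = 0 →
      h1 1 + θ * (∫ t in (0:ℝ)..1, h2 t * derivWithin h2 (Set.Icc 0 1) t) = 1 →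
      (1/2 : ℝ) ≤ (1/2) * ∫ t in (0:ℝ)..1,
        ((derivWithin h1 (Set.Icc 0 1) t) ^ 2 + (derivWithin h2 (Set.Icc 0 1) t) ^ 2)) ∧
    ((fun t : ℝ => t) 0 = 0 ∧ (fun _ : ℝ => (0:ℝ)) 0 = 0 ∧
      (fun t : ℝ => t) 1 + θ * (∫ t in (0:ℝ)..1,
        (fun _ : ℝ => (0:ℝ)) t * derivWithin (fun _ : ℝ => (0:ℝ)) (Set.Icc 0 1) t) = 1 ∧
      (1/2) * (∫ t in (0:ℝ)..1,
        ((derivWithin (fun t : ℝ => t) (Set.Icc 0 1) t) ^ 2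
          + (derivWithin (fun _ : ℝ => (0:ℝ)) (Set.Icc 0 1) t) ^ 2)) = 1/2) ∧
    (θ < 1 → ∀ h1 h2 : ℝ → ℝ,
      ContDiffOn ℝ 1 h1 (Set.Icc 0 1) → ContDiffOn ℝ 1 h2 (Set.Icc 0 1) →
      h1 0 = 0 → h2 0 = 0 →
      h1 1 + θ * (∫ t in (0:ℝ)..1, h2 t * derivWithin h2 (Set.Icc 0 1) t) = 1 →
      (1/2) * (∫ t in (0:ℝ)..1,
        ((derivWithin h1 (Set.Icc 0 1) t) ^ 2 + (derivWithin h2 (Set.Icc 0 1) t) ^ 2)) = 1/2 →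
      ∀ t ∈ Set.Icc (0:ℝ) 1, h1 t = t ∧ h2 t = 0) := by
  refine ⟨fun h1 h2 hc1 hc2 h10 h20 hcon => ?_, ⟨rfl, rfl, by simp, ?_⟩,
    fun hθlt h1 h2 hc1 hc2 h10 h20 hcon hE t ht =>
      eq_straight_line_of_integral_energy_eq_one hθlt hc1 hc2 h10 h20 hcon (by linarith) ht⟩
  · have hdef1 : 0 ≤ ∫ t in (0:ℝ)..1, (derivWithin h1 (Icc 0 1) t - h1 1) ^ 2 :=
      integral_nonneg zero_le_one fun _ _ => sq_nonneg _
    have hdef2 : 0 ≤ ∫ t in (0:ℝ)..1, (derivWithin h2 (Icc 0 1) t - h2 1) ^ 2 :=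
      integral_nonneg zero_le_one fun _ _ => sq_nonneg _
    rw [integral_energy_eq_of_constraint θ hc1 hc2 h10 h20 hcon]
    linarith [mul_nonneg (sub_nonneg.2 hθ.2) (sq_nonneg (h2 1)), sq_nonneg (θ * h2 1 ^ 2 / 2)]
  · rw [integral_energy_straight_line]
    norm_num
end

section
/- Fix θ ∈ [0,1) and for ε > 0 define F_θ(ε) := (1/(2πε)) ∫_ℝ exp( −(1 − θ ε² (m² − 1)/2)² / (2ε²) − m²/2 ) dm, which is the value at y = 1 of the (continuous) probability density of the random variable ε N + θ ε² (M² − 1)/2, where N, M are independent standard normal random variables. Then there exists a constant c₀ > 0 such that ε · e^{1/(2ε²)} · F_θ(ε) → c₀ as ε ↓ 0; i.e. F_θ(ε) = ε^{−1} e^{−1/(2ε²)} (c₀ + o(1)). -/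
open MeasureTheory

/-!
Completing the square, `1/(2ε²)` cancels the leading term of the exponent of `Fdens θ ε`, so that
`ε e^{1/(2ε²)} F_θ(ε) = (2π)⁻¹ ∫ exp (θ(m²−1)/2 − ε²θ²(m²−1)²/8 − m²/2) dm`.
The integrand decreases to the Gaussian `e^{−θ/2} e^{−(1−θ)m²/2}` as `ε → 0`, and this Gaussian
is integrable because `θ < 1`; dominated convergence gives
`c₀ = (2π)⁻¹ e^{−θ/2} √(2π/(1−θ)) > 0`.
-/

/-- The density at `y = 1` of `εN + θε²(M²−1)/2` (N, M independent standard normals),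
written as a convolution integral. -/
noncomputable def Fdens (θ ε : ℝ) : ℝ :=
  (1 / (2 * Real.pi * ε)) *
    ∫ m : ℝ, Real.exp (-(1 - θ * ε ^ 2 * (m ^ 2 - 1) / 2) ^ 2 / (2 * ε ^ 2) - m ^ 2 / 2)

open Filter Topology Real

lemma inv_two_mul_sq_add_exponent (θ ε m : ℝ) (hε : ε ≠ 0) :
    1 / (2 * ε ^ 2) + (-(1 - θ * ε ^ 2 * (m ^ 2 - 1) / 2) ^ 2 / (2 * ε ^ 2) - m ^ 2 / 2)
      = θ * (m ^ 2 - 1) / 2 - ε ^ 2 * θ ^ 2 * (m ^ 2 - 1) ^ 2 / 8 - m ^ 2 / 2 := by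
  field_simp
  ring

lemma mul_exp_mul_Fdens (θ ε : ℝ) (hε : ε ≠ 0) :
    ε * exp (1 / (2 * ε ^ 2)) * Fdens θ ε
      = (2 * π)⁻¹ *
        ∫ m : ℝ, exp (θ * (m ^ 2 - 1) / 2 - ε ^ 2 * θ ^ 2 * (m ^ 2 - 1) ^ 2 / 8 - m ^ 2 / 2) := by
  have hexp : ∀ m : ℝ, exp (1 / (2 * ε ^ 2)) *
      exp (-(1 - θ * ε ^ 2 * (m ^ 2 - 1) / 2) ^ 2 / (2 * ε ^ 2) - m ^ 2 / 2)
        = exp (θ * (m ^ 2 - 1) / 2 - ε ^ 2 * θ ^ 2 * (m ^ 2 - 1) ^ 2 / 8 - m ^ 2 / 2) := by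
    intro m
    rw [← exp_add, inv_two_mul_sq_add_exponent θ ε m hε]
  rw [Fdens, ← funext hexp, integral_const_mul]
  field_simp

lemma exp_tilted_gaussian_eq (θ m : ℝ) :
    exp (θ * (m ^ 2 - 1) / 2 - m ^ 2 / 2) = exp (-θ / 2) * exp (-((1 - θ) / 2) * m ^ 2) := by
  rw [← exp_add]
  ring_nf

lemma integral_exp_tilted_gaussian (θ : ℝ) :
    ∫ m : ℝ, exp (θ * (m ^ 2 - 1) / 2 - m ^ 2 / 2) = exp (-θ / 2) * √(π / ((1 - θ) / 2)) := by
  simp_rw [exp_tilted_gaussian_eq, integral_const_mul, integral_gaussian]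

lemma integrable_exp_tilted_gaussian {θ : ℝ} (hθ : θ < 1) :
    Integrable fun m : ℝ => exp (θ * (m ^ 2 - 1) / 2 - m ^ 2 / 2) := by
  simp_rw [exp_tilted_gaussian_eq]
  exact (integrable_exp_neg_mul_sq (by linarith)).const_mul _

lemma continuous_integral_exp_quartic_perturbation {θ : ℝ} (hθ : θ < 1) :
    Continuous fun ε : ℝ =>
      ∫ m : ℝ, exp (θ * (m ^ 2 - 1) / 2 - ε ^ 2 * θ ^ 2 * (m ^ 2 - 1) ^ 2 / 8 - m ^ 2 / 2) := by
  refine continuous_of_dominated (fun ε => by fun_prop) (fun ε => ae_of_all _ fun m => ?_)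
    (integrable_exp_tilted_gaussian hθ) (ae_of_all _ fun m => by fun_prop)
  rw [Real.norm_of_nonneg (exp_pos _).le, exp_le_exp]
  have : 0 ≤ ε ^ 2 * θ ^ 2 * (m ^ 2 - 1) ^ 2 / 8 := by positivity
  linarith

theorem stmt_10_general (θ : ℝ) (hθ1 : θ < 1) :
    ∃ c₀ : ℝ, 0 < c₀ ∧
      Filter.Tendsto (fun ε : ℝ => ε * Real.exp (1 / (2 * ε ^ 2)) * Fdens θ ε)
        (nhdsWithin 0 (Set.Ioi 0)) (nhds c₀) := by
  refine ⟨(2 * π)⁻¹ * (exp (-θ / 2) * √(π / ((1 - θ) / 2))), by positivity, ?_⟩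
  have hlim := ((continuous_integral_exp_quartic_perturbation hθ1).tendsto 0).mono_left
    (nhdsWithin_le_nhds (s := Set.Ioi 0))
  simp only [ne_eq, OfNat.ofNat_ne_zero, not_false_eq_true, zero_pow, zero_mul, zero_div,
    sub_zero, integral_exp_tilted_gaussian] at hlim
  refine (hlim.const_mul _).congr' ?_
  filter_upwards [self_mem_nhdsWithin] with ε (hε : 0 < ε)
  exact (mul_exp_mul_Fdens θ ε hε.ne').symm

/-- For `θ ∈ [0,1)` one has `F_θ(ε) = ε⁻¹ e^{−1/(2ε²)} (c₀ + o(1))` as `ε ↓ 0`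
for some constant `c₀ > 0`. -/
theorem stmt_10 (θ : ℝ) (hθ0 : 0 ≤ θ) (hθ1 : θ < 1) :
    ∃ c₀ : ℝ, 0 < c₀ ∧
      Filter.Tendsto (fun ε : ℝ => ε * Real.exp (1 / (2 * ε ^ 2)) * Fdens θ ε)
        (nhdsWithin 0 (Set.Ioi 0)) (nhds c₀) :=
  stmt_10_general θ hθ1
end

section
/- For every r > π one has 4(1 − cos r)/(r − sin r) < 8/π, and 4(1 − cos r)/(r − sin r) → 8/π as r → π. Moreover, for every r with cos r ≠ −1 and r ≠ sin r, 4 sin² r / ((r − sin r)(1 + cos r)) = 4(1 − cos r)/(r − sin r). -/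
/-!
The inequality is `π (1 - cos r) < 2 (r - sin r)`, i.e. positivity of
`g r = 2 r - π - 2 sin r + π cos r`. We have `g π = 0` and `g' r = 2 - 2 cos r - π sin r > 0`
on `(π, 2π)`, where `sin r < 0`; beyond `2π` the linear term `2 r - π ≥ 3π` dominates the
bounded trigonometric part. At `r = π` the quotient is continuous with value `8 / π`, and the
identity is `sin² r = (1 - cos r)(1 + cos r)`.
-/

open Real Set Filter Topology

lemma Real.sin_neg_of_pi_lt_of_lt_two_pi {r : ℝ} (h₁ : π < r) (h₂ : r < 2 * π) : sin r < 0 := by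
  rw [← sin_sub_two_pi]
  exact sin_neg_of_neg_of_neg_pi_lt (by linarith) (by linarith)

lemma hasDerivAt_two_mul_sub_pi_sub_two_sin_add_pi_cos (x : ℝ) :
    HasDerivAt (fun r => 2 * r - π - 2 * sin r + π * cos r)
      (2 - 2 * cos x - π * sin x) x :=
  ((((hasDerivAt_id x).const_mul 2).sub_const π).sub ((hasDerivAt_sin x).const_mul 2)).add
    ((hasDerivAt_cos x).const_mul π) |>.congr_deriv (by ring)

lemma strictMonoOn_two_mul_sub_pi_sub_two_sin_add_pi_cos :
    StrictMonoOn (fun r => 2 * r - π - 2 * sin r + π * cos r) (Icc π (2 * π)) := by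
  refine strictMonoOn_of_deriv_pos (convex_Icc _ _) (by fun_prop) fun x hx => ?_
  rw [interior_Icc] at hx
  rw [(hasDerivAt_two_mul_sub_pi_sub_two_sin_add_pi_cos x).deriv]
  have hsin := sin_neg_of_pi_lt_of_lt_two_pi hx.1 hx.2
  nlinarith [cos_le_one x, pi_pos]

lemma pi_mul_one_sub_cos_lt_two_mul_sub_sin {r : ℝ} (hr : π < r) :
    π * (1 - cos r) < 2 * (r - sin r) := by
  rcases le_or_gt r (2 * π) with hle | hgt
  · have := strictMonoOn_two_mul_sub_pi_sub_two_sin_add_pi_cos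
      (left_mem_Icc.2 (by linarith [pi_pos])) ⟨hr.le, hle⟩ hr
    simp only [sin_pi, cos_pi] at this
    linarith
  · nlinarith [sin_le_one r, neg_one_le_cos r, pi_gt_three]

lemma sin_sq_div_one_add_cos {r : ℝ} (hr : cos r ≠ -1) :
    sin r ^ 2 / (1 + cos r) = 1 - cos r := by
  have h : 1 + cos r ≠ 0 := fun h => hr (by linarith)
  rw [div_eq_iff h, sin_sq]
  ring

/-- In Case (III) of the Heisenberg example: `4(1 − cos r)/(r − sin r) < 8/π` for all
`r > π`, the value `8/π` is attained in the limit `r → π`, and away from the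
singularities `4 sin² r/((r − sin r)(1 + cos r)) = 4(1 − cos r)/(r − sin r)`. -/
theorem stmt_16 :
    (∀ r : ℝ, Real.pi < r → 4 * (1 - Real.cos r) / (r - Real.sin r) < 8 / Real.pi) ∧
    Filter.Tendsto (fun r : ℝ => 4 * (1 - Real.cos r) / (r - Real.sin r))
      (nhdsWithin Real.pi {Real.pi}ᶜ) (nhds (8 / Real.pi)) ∧
    (∀ r : ℝ, Real.cos r ≠ -1 → r ≠ Real.sin r →
      4 * Real.sin r ^ 2 / ((r - Real.sin r) * (1 + Real.cos r))
        = 4 * (1 - Real.cos r) / (r - Real.sin r)) := by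
  refine ⟨fun r hr => ?_, ?_, fun r hcos _ => ?_⟩
  · have hden : 0 < r - sin r := sub_pos.2 (sin_lt (pi_pos.trans hr))
    rw [div_lt_div_iff₀ hden pi_pos]
    linarith [pi_mul_one_sub_cos_lt_two_mul_sub_sin hr]
  · have hcont : ContinuousAt (fun r : ℝ => 4 * (1 - cos r) / (r - sin r)) π :=
      ContinuousAt.div (by fun_prop) (by fun_prop) (by simp [pi_ne_zero])
    have hval : 4 * (1 - cos π) / (π - sin π) = 8 / π := by norm_num
    exact (hval ▸ hcont.tendsto).mono_left nhdsWithin_le_nhds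
  · rw [mul_comm (r - sin r), ← div_div, mul_div_assoc, sin_sq_div_one_add_cos hcos]
end
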